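/- arXiv:2210.16609 — 2 statements merged into one kernel-verified Lean document; each statement's English description precedes it below -/
import Mathlib

section
/- Let $d \geq 1$, let $r \subset \mathbb{R}^d$ be an axis-parallel box with side-length vector $\delta \in \mathbb{R}_{>0}^d$, and consider the translated family $\widehat{T} := \{r + \delta \odot p : p \in \mathbb{Z}^d\}$. Let $B$ and $C$ be axis-parallel boxes containing $r$, set $B_t := B + \delta \odot p_t$ and $C_s := C + \delta \odot p_s$ for $t, s \in \widehat{T}$, and for $\eta > 0$ call a pair $(t,s)$ inadmissible if $\max\{\mathrm{diam}(B_t), \mathrm{diam}(C_s)\} > \eta\, \mathrm{dist}(B_t, C_s)$. Assume $\mathrm{diam}(B) \leq C_{bb}\, \mathrm{diam}(r)$ and $\mathrm{diam}(C) \leq C_{bb}\, \mathrm{diam}(r)$ for some $C_{bb} \geq 1$, and $\mathrm{diam}(r)^d \leq C_{dv}\, \lambda_d(r)$ for a constant $C_{dv} > 1$, where $\lambda_d$ is Lebesgue measure. Then for every $t \in \widehat{T}$, the number of $s \in \widehat{T}$ with $(t,s)$ inadmissible is at most $C_{sp} := 2^{-d}(3 + 2\eta^{-1})^d C_{bb}^d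 \omega_d C_{dv}$, where $\omega_d$ is the volume of the $d$-dimensional Euclidean unit ball. -/
/-!
The centre of `B_t` is within `diam B / 2` of every point of `B_t`. If `(t, s)` is inadmissible,
some point of `C_s` is within `η⁻¹ max (diam B) (diam C)` of `B_t`, and every other point of `C_s`
within `diam C` of that one, so `C_s`, and with it the translate of `r` it contains, lies in the
closed ball of radius `ρ = 2⁻¹ (3 + 2η⁻¹) max (diam B) (diam C)` about that centre. The open
translates of `r` are pairwise disjoint and all have volume `λ(r)`, so there are at most
`ρ^d ω / λ(r)` of them; the bounds on the diameters turn this into `C_sp`.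
-/

open MeasureTheory Metric

/-- Distance between two subsets of Euclidean space. -/
noncomputable def setDist {d : ℕ} (X Y : Set (EuclideanSpace ℝ (Fin d))) : ℝ :=
  sInf {r | ∃ x ∈ X, ∃ y ∈ Y, r = dist x y}

/-- The axis-parallel box with lower corner `a` and upper corner `b`. -/
def box {d : ℕ} (a b : Fin d → ℝ) : Set (EuclideanSpace ℝ (Fin d)) :=
  {x | ∀ i, x i ∈ Set.Icc (a i) (b i)}

/-- Translate of a set by a vector `c`. -/
def trBox {d : ℕ} (X : Set (EuclideanSpace ℝ (Fin d))) (c : EuclideanSpace ℝ (Fin d)) :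
    Set (EuclideanSpace ℝ (Fin d)) := (fun x => x + c) '' X

/-- The translation vector `δ ⊙ p` for an integer displacement `p`. -/
noncomputable def mvec {d : ℕ} (δ : Fin d → ℝ) (p : Fin d → ℤ) : EuclideanSpace ℝ (Fin d) :=
  WithLp.toLp 2 (fun i => δ i * (p i : ℝ))

open scoped ENNReal

theorem encard_mul_le_measure_of_pairwiseDisjoint {ι α : Type*} [MeasurableSpace α]
    {μ : Measure α} {S : Set ι} {s : ι → Set α} {K : Set α} {V : ℝ≥0∞} (hS : S.Countable)
    (hdisj : S.PairwiseDisjoint s) (hmeas : ∀ i ∈ S, MeasurableSet (s i))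
    (hμ : ∀ i ∈ S, μ (s i) = V) (hsub : ∀ i ∈ S, s i ⊆ K) : (S.encard : ℝ≥0∞) * V ≤ μ K :=
  calc (S.encard : ℝ≥0∞) * V = ∑' _ : S, V := (ENNReal.tsum_set_const S V).symm
    _ = ∑' i : S, μ (s i) := tsum_congr fun i => (hμ i i.2).symm
    _ = μ (⋃ i ∈ S, s i) := (measure_biUnion hS hdisj hmeas).symm
    _ ≤ μ K := measure_mono (Set.iUnion₂_subset hsub)

theorem finite_and_natCard_mul_le {ι α : Type*} [MeasurableSpace α] {μ : Measure α}
    {S : Set ι} {s : ι → Set α} {K : Set α} {V : ℝ≥0∞} (hV : V ≠ 0) (hK : μ K ≠ ∞)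
    (hS : S.Countable) (hdisj : S.PairwiseDisjoint s) (hmeas : ∀ i ∈ S, MeasurableSet (s i))
    (hμ : ∀ i ∈ S, μ (s i) = V) (hsub : ∀ i ∈ S, s i ⊆ K) :
    S.Finite ∧ (Nat.card S : ℝ) * V.toReal ≤ (μ K).toReal := by
  have h := encard_mul_le_measure_of_pairwiseDisjoint hS hdisj hmeas hμ hsub
  have hfin : S.Finite := by
    rw [← Set.encard_ne_top_iff]
    rintro htop
    rw [htop, ENat.toENNReal_top, ENNReal.top_mul hV, top_le_iff] at h
    exact hK h
  refine ⟨hfin, ?_⟩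
  rw [← hfin.cast_ncard_eq] at h
  simpa using ENNReal.toReal_mono hK h

theorem dist_le_half_diam_of_pointReflection_mem {E : Type*} [NormedAddCommGroup E]
    [NormedSpace ℝ E] {s : Set E} (hs : Bornology.IsBounded s) {m x : E} (hx : x ∈ s)
    (hmx : AffineIsometryEquiv.pointReflection ℝ m x ∈ s) : dist x m ≤ diam s / 2 := by
  have := dist_le_diam_of_mem hs hmx hx
  rw [AffineIsometryEquiv.dist_pointReflection_self_real, dist_comm] at this
  linarith

theorem Int.eq_of_mem_Ioo_mul_of_mem_Ioo_mul {δ y : ℝ} {k l : ℤ}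
    (hk : y ∈ Set.Ioo (δ * k) (δ * (k + 1))) (hl : y ∈ Set.Ioo (δ * l) (δ * (l + 1))) :
    k = l := by
  have hδ : 0 < δ := by nlinarith [hk.1, hk.2]
  have hkl : (k : ℝ) < l + 1 := (mul_lt_mul_iff_of_pos_left hδ).1 (hk.1.trans hl.2)
  have hlk : (l : ℝ) < k + 1 := (mul_lt_mul_iff_of_pos_left hδ).1 (hl.1.trans hk.2)
  norm_cast at hkl hlk
  omega

section EuclideanBoxes

variable {d : ℕ}

section Boxes

theorem box_eq_preimage_Icc (a b : Fin d → ℝ) : box a b = WithLp.ofLp ⁻¹' Set.Icc a b := by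
  ext x
  simp [box, Pi.le_def, forall_and]

theorem toLp_mem_box {a b : Fin d → ℝ} (hab : a ≤ b) : WithLp.toLp 2 a ∈ box a b :=
  fun i => ⟨le_rfl, hab i⟩

theorem isBounded_box (a b : Fin d → ℝ) : Bornology.IsBounded (box a b) := by
  rw [box_eq_preimage_Icc]
  exact (PiLp.antilipschitzWith_ofLp 2 _).isBounded_preimage (Metric.isBounded_Icc a b)

theorem pointReflection_mem_box {a b : Fin d → ℝ} {x : EuclideanSpace ℝ (Fin d)}
    (hx : x ∈ box a b) :
    AffineIsometryEquiv.pointReflection ℝ (WithLp.toLp 2 (midpoint ℝ a b)) x ∈ box a b := by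
  intro i
  obtain ⟨h₁, h₂⟩ := hx i
  simp only [Set.mem_Icc, midpoint_eq_smul_add, invOf_eq_inv, smul_add, WithLp.toLp_add,
    WithLp.toLp_smul, AffineIsometryEquiv.pointReflection_apply, vsub_eq_sub, vadd_eq_add,
    PiLp.add_apply, PiLp.sub_apply, PiLp.smul_apply, smul_eq_mul]
  constructor <;> linarith

theorem box_subset_closedBall_midpoint (a b : Fin d → ℝ) :
    box a b ⊆ closedBall (WithLp.toLp 2 (midpoint ℝ a b)) (diam (box a b) / 2) := fun _ hx =>
  dist_le_half_diam_of_pointReflection_mem (isBounded_box a b) hx (pointReflection_mem_box hx)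

theorem volume_box (a b : Fin d → ℝ) : volume (box a b) = volume (Set.Icc a b) := by
  rw [box_eq_preimage_Icc]
  exact (PiLp.volume_preserving_ofLp _).measure_preimage measurableSet_Icc.nullMeasurableSet

theorem toReal_volume_box_pos {a b : Fin d → ℝ} (hab : ∀ i, a i < b i) :
    0 < (volume (box a b)).toReal := by
  rw [volume_box, Real.volume_Icc_pi_toReal fun i => (hab i).le]
  exact Finset.prod_pos fun i _ => sub_pos.2 (hab i)

theorem toReal_volume_closedBall (x : EuclideanSpace ℝ (Fin d)) {ρ : ℝ} (hρ : 0 ≤ ρ) :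
    (volume (closedBall x ρ)).toReal =
      ρ ^ d * (volume (ball (0 : EuclideanSpace ℝ (Fin d)) 1)).toReal := by
  rw [Measure.addHaar_closedBall _ _ hρ, ENNReal.toReal_mul, ENNReal.toReal_ofReal (by positivity),
    finrank_euclideanSpace_fin]

/-- Unlike closed boxes, the lattice translates of an open box are pairwise disjoint. -/
def openBox (a b : Fin d → ℝ) : Set (EuclideanSpace ℝ (Fin d)) :=
  WithLp.ofLp ⁻¹' Set.univ.pi fun i => Set.Ioo (a i) (b i)

theorem openBox_subset_box (a b : Fin d → ℝ) : openBox a b ⊆ box a b :=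
  fun _ hx i => Set.Ioo_subset_Icc_self (hx i trivial)

theorem measurableSet_openBox (a b : Fin d → ℝ) : MeasurableSet (openBox a b) :=
  (MeasurableSet.univ_pi fun _ => measurableSet_Ioo).preimage
    (PiLp.volume_preserving_ofLp _).measurable

theorem volume_openBox (a b : Fin d → ℝ) : volume (openBox a b) = volume (box a b) := by
  rw [volume_box, Real.volume_Icc_pi, openBox,
    (PiLp.volume_preserving_ofLp _).measure_preimage
      (MeasurableSet.univ_pi fun _ => measurableSet_Ioo).nullMeasurableSet, Real.volume_pi_Ioo]

end Boxes

section Translates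

variable {X Y : Set (EuclideanSpace ℝ (Fin d))} {m v : EuclideanSpace ℝ (Fin d)}

theorem trBox_eq_preimage (X : Set (EuclideanSpace ℝ (Fin d))) (v : EuclideanSpace ℝ (Fin d)) :
    trBox X v = (· + -v) ⁻¹' X :=
  Set.image_add_right

theorem trBox_mono (h : X ⊆ Y) (v : EuclideanSpace ℝ (Fin d)) : trBox X v ⊆ trBox Y v :=
  Set.image_mono h

theorem diam_trBox (X : Set (EuclideanSpace ℝ (Fin d))) (v : EuclideanSpace ℝ (Fin d)) :
    diam (trBox X v) = diam X :=
  (isometry_add_right v).diam_image X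

theorem isBounded_trBox (hX : Bornology.IsBounded X) (v : EuclideanSpace ℝ (Fin d)) :
    Bornology.IsBounded (trBox X v) :=
  (isometry_add_right v).lipschitz.isBounded_image hX

theorem volume_trBox (X : Set (EuclideanSpace ℝ (Fin d))) (v : EuclideanSpace ℝ (Fin d)) :
    volume (trBox X v) = volume X := by
  rw [trBox_eq_preimage, measure_preimage_add_right]

theorem measurableSet_trBox (hX : MeasurableSet X) (v : EuclideanSpace ℝ (Fin d)) :
    MeasurableSet (trBox X v) := by
  rw [trBox_eq_preimage]
  exact measurable_add_const _ hX

theorem trBox_subset_closedBall {R : ℝ} (h : X ⊆ closedBall m R) (v : EuclideanSpace ℝ (Fin d)) :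
    trBox X v ⊆ closedBall (m + v) R := by
  rintro _ ⟨x, hx, rfl⟩
  rw [mem_closedBall, dist_add_right]
  exact h hx

theorem disjoint_trBox_openBox {a b δ : Fin d → ℝ} (hδ : ∀ i, δ i = b i - a i)
    {q q' : Fin d → ℤ} (hqq' : q ≠ q') :
    Disjoint (trBox (openBox a b) (mvec δ q)) (trBox (openBox a b) (mvec δ q')) := by
  have mem_Ioo {q : Fin d → ℤ} {x : EuclideanSpace ℝ (Fin d)}
      (hx : x ∈ trBox (openBox a b) (mvec δ q)) (i : Fin d) :
      x i - a i ∈ Set.Ioo (δ i * q i) (δ i * (q i + 1)) := by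
    rw [trBox_eq_preimage, Set.mem_preimage, openBox, Set.mem_preimage, Set.mem_univ_pi] at hx
    obtain ⟨h₁, h₂⟩ := hx i
    simp only [mvec, PiLp.add_apply, PiLp.neg_apply, lt_add_neg_iff_add_lt,
      add_neg_lt_iff_lt_add] at h₁ h₂
    constructor <;> nlinarith [hδ i]
  obtain ⟨i, hi⟩ := Function.ne_iff.mp hqq'
  exact Set.disjoint_left.2 fun x hx hx' =>
    hi (Int.eq_of_mem_Ioo_mul_of_mem_Ioo_mul (mem_Ioo hx i) (mem_Ioo hx' i))

end Translates

section Inadmissible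

variable {X Y : Set (EuclideanSpace ℝ (Fin d))} {m : EuclideanSpace ℝ (Fin d)}

def Inadmissible (η : ℝ) (X Y : Set (EuclideanSpace ℝ (Fin d))) : Prop :=
  η * setDist X Y < max (diam X) (diam Y)

theorem subset_closedBall_of_setDist_lt {R ε : ℝ} (hXm : X ⊆ closedBall m R) (hX : X.Nonempty)
    (hY : Y.Nonempty) (hYb : Bornology.IsBounded Y) (h : setDist X Y < ε) :
    Y ⊆ closedBall m (diam Y + ε + R) := by
  obtain ⟨x, hx⟩ := hX
  obtain ⟨y, hy⟩ := hY
  have hbdd : BddBelow {r | ∃ x ∈ X, ∃ y ∈ Y, r = dist x y} :=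
    ⟨0, by rintro _ ⟨x, -, y, -, rfl⟩; exact dist_nonneg⟩
  obtain ⟨_, ⟨x, hx, y, hy, rfl⟩, hxy⟩ := (csInf_lt_iff hbdd ⟨_, x, hx, y, hy, rfl⟩).1 h
  intro z hz
  calc dist z m ≤ dist z y + dist y x + dist x m := dist_triangle4 z y x m
    _ ≤ diam Y + ε + R := by
      gcongr
      · exact dist_le_diam_of_mem hYb hz hy
      · rw [dist_comm]; exact hxy.le
      · exact hXm hx

theorem Inadmissible.subset_closedBall {η : ℝ} (hη : 0 < η)
    (hXm : X ⊆ closedBall m (diam X / 2)) (hX : X.Nonempty) (hY : Y.Nonempty)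
    (hYb : Bornology.IsBounded Y) (h : Inadmissible η X Y) :
    Y ⊆ closedBall m (2⁻¹ * (3 + 2 * η⁻¹) * max (diam X) (diam Y)) := by
  have hdist : setDist X Y < η⁻¹ * max (diam X) (diam Y) := by
    rw [inv_mul_eq_div, lt_div_iff₀' hη]
    exact h
  refine (subset_closedBall_of_setDist_lt hXm hX hY hYb hdist).trans
    (closedBall_subset_closedBall ?_)
  linarith [le_max_left (diam X) (diam Y), le_max_right (diam X) (diam Y)]

theorem Inadmissible.trBox_subset_closedBall_midpoint {aB bB aC bC : Fin d → ℝ}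
    (hB : (box aB bB).Nonempty) (hC : (box aC bC).Nonempty) {η : ℝ} (hη : 0 < η)
    {u v : EuclideanSpace ℝ (Fin d)}
    (h : Inadmissible η (trBox (box aB bB) u) (trBox (box aC bC) v)) :
    trBox (box aC bC) v ⊆ closedBall (WithLp.toLp 2 (midpoint ℝ aB bB) + u)
      (2⁻¹ * (3 + 2 * η⁻¹) * max (diam (box aB bB)) (diam (box aC bC))) := by
  have hBm := trBox_subset_closedBall (box_subset_closedBall_midpoint aB bB) u
  rw [← diam_trBox _ u] at hBm
  have hCm := h.subset_closedBall (Y := trBox (box aC bC) v) hη hBm (hB.image _)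
    (hC.image _) (isBounded_trBox (isBounded_box aC bC) v)
  rwa [diam_trBox, diam_trBox] at hCm

end Inadmissible

end EuclideanBoxes

theorem stmt1_general (d : ℕ)
    (a b : Fin d → ℝ) (hab : ∀ i, a i < b i)
    (δ : Fin d → ℝ) (hδ : ∀ i, δ i = b i - a i)
    (aB bB aC bC : Fin d → ℝ)
    (hrB : box a b ⊆ box aB bB) (hrC : box a b ⊆ box aC bC)
    (η Cbb Cdv : ℝ) (hη : 0 < η) (hCbb : 1 ≤ Cbb)
    (hB : diam (box aB bB) ≤ Cbb * diam (box a b))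
    (hC : diam (box aC bC) ≤ Cbb * diam (box a b))
    (hdv : diam (box a b) ^ d ≤ Cdv * (volume (box a b)).toReal)
    (ω : ℝ) (hω : ω = (volume (ball (0 : EuclideanSpace ℝ (Fin d)) 1)).toReal)
    (Csp : ℝ) (hCsp : Csp = ((2 : ℝ) ^ d)⁻¹ * (3 + 2 * η⁻¹) ^ d * Cbb ^ d * ω * Cdv)
    (p : Fin d → ℤ) :
    {q : Fin d → ℤ |
        η * setDist (trBox (box aB bB) (mvec δ p)) (trBox (box aC bC) (mvec δ q)) <
          max (diam (trBox (box aB bB) (mvec δ p)))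
            (diam (trBox (box aC bC) (mvec δ q)))}.Finite ∧
      (Nat.card {q : Fin d → ℤ |
          η * setDist (trBox (box aB bB) (mvec δ p)) (trBox (box aC bC) (mvec δ q)) <
            max (diam (trBox (box aB bB) (mvec δ p)))
              (diam (trBox (box aC bC) (mvec δ q)))} : ℝ) ≤ Csp := by
  let S := {q | Inadmissible η (trBox (box aB bB) (mvec δ p)) (trBox (box aC bC) (mvec δ q))}
  show S.Finite ∧ (Nat.card S : ℝ) ≤ Csp
  have hr : (box a b).Nonempty := ⟨_, toLp_mem_box fun i => (hab i).le⟩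
  set M := max (diam (box aB bB)) (diam (box aC bC))
  set ρ := 2⁻¹ * (3 + 2 * η⁻¹) * M
  have hball (q) (hq : q ∈ S) : trBox (openBox a b) (mvec δ q) ⊆
      closedBall (WithLp.toLp 2 (midpoint ℝ aB bB) + mvec δ p) ρ :=
    (trBox_mono ((openBox_subset_box a b).trans hrC) _).trans
      (Inadmissible.trBox_subset_closedBall_midpoint (hr.mono hrB) (hr.mono hrC) hη hq)
  have hV := toReal_volume_box_pos hab
  obtain ⟨hfin, hcount⟩ := finite_and_natCard_mul_le (ENNReal.toReal_pos_iff.1 hV).1.ne'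
    measure_closedBall_lt_top.ne S.to_countable
    (fun q _ q' _ h => disjoint_trBox_openBox hδ h)
    (fun q _ => measurableSet_trBox (measurableSet_openBox a b) _)
    (fun q _ => by rw [volume_trBox, volume_openBox]) hball
  refine ⟨hfin, le_of_mul_le_mul_right ?_ hV⟩
  have hMd : M ^ d ≤ Cbb ^ d * diam (box a b) ^ d := by
    rw [← mul_pow]
    exact pow_le_pow_left₀ (diam_nonneg.trans (le_max_left _ _)) (max_le hB hC) d
  rw [toReal_volume_closedBall _ (by positivity), ← hω] at hcount
  have hω0 : 0 ≤ ω := hω ▸ ENNReal.toReal_nonneg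
  have hCbb0 : 0 ≤ Cbb ^ d := pow_nonneg (by linarith) d
  calc _ ≤ ρ ^ d * ω := hcount
    _ = (2 ^ d)⁻¹ * (3 + 2 * η⁻¹) ^ d * M ^ d * ω := by rw [mul_pow, mul_pow, inv_pow]
    _ ≤ (2 ^ d)⁻¹ * (3 + 2 * η⁻¹) ^ d * (Cbb ^ d * (Cdv * (volume (box a b)).toReal)) * ω := by
      gcongr
      exact hMd.trans (by gcongr)
    _ = Csp * (volume (box a b)).toReal := by rw [hCsp]; ring

/-- For every box `t` of the translated family, the number of boxes `s` of the
translated family such that the pair `(t,s)` is inadmissible is bounded by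
`C_sp = 2^{-d} (3 + 2η⁻¹)^d C_bb^d ω_d C_dv`. -/
theorem stmt1 (d : ℕ) (hd : 1 ≤ d)
    (a b : Fin d → ℝ) (hab : ∀ i, a i < b i)
    (δ : Fin d → ℝ) (hδ : ∀ i, δ i = b i - a i)
    (aB bB aC bC : Fin d → ℝ)
    (hrB : box a b ⊆ box aB bB) (hrC : box a b ⊆ box aC bC)
    (η Cbb Cdv : ℝ) (hη : 0 < η) (hCbb : 1 ≤ Cbb) (hCdv : 1 < Cdv)
    (hB : diam (box aB bB) ≤ Cbb * diam (box a b))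
    (hC : diam (box aC bC) ≤ Cbb * diam (box a b))
    (hdv : diam (box a b) ^ d ≤ Cdv * (volume (box a b)).toReal)
    (ω : ℝ) (hω : ω = (volume (ball (0 : EuclideanSpace ℝ (Fin d)) 1)).toReal)
    (Csp : ℝ) (hCsp : Csp = ((2 : ℝ) ^ d)⁻¹ * (3 + 2 * η⁻¹) ^ d * Cbb ^ d * ω * Cdv)
    (p : Fin d → ℤ) :
    {q : Fin d → ℤ |
        η * setDist (trBox (box aB bB) (mvec δ p)) (trBox (box aC bC) (mvec δ q)) <
          max (diam (trBox (box aB bB) (mvec δ p)))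
            (diam (trBox (box aC bC) (mvec δ q)))}.Finite ∧
      (Nat.card {q : Fin d → ℤ |
          η * setDist (trBox (box aB bB) (mvec δ p)) (trBox (box aC bC) (mvec δ q)) <
            max (diam (trBox (box aB bB) (mvec δ p)))
              (diam (trBox (box aC bC) (mvec δ q)))} : ℝ) ≤ Csp :=
  stmt1_general d a b hab δ hδ aB bB aC bC hrB hrC η Cbb Cdv hη hCbb hB hC hdv ω hω Csp hCsp p
end

section
/- Let $d \geq 2$, and let a cluster tree $T_I$ of boxes with maximal level $\ell_{max} \in d\cdot\mathbb{N}$ satisfy $|T_I^{(\ell)}| \leq C_{nb}\, \mathrm{diam}(r^{(\ell)})^{-(d-1)}$ on every level $\ell$, where the reference box diameters satisfy $\mathrm{diam}(r^{(\ell+d)}) = \tfrac{1}{2}\mathrm{diam}(r^{(\ell)})$ and are non-increasing in $\ell$. Suppose furthermore $\ell_{max} \leq \tfrac{d}{d-1}(\log_2 |I| - \log_2(C_{rk} k)) + d$. Then the total number of nodes satisfies $|T_I| < C_{nb}\, d\, \mathrm{diam}(r^{(0)})^{-(d-1)}\, (2^{d-1}+2)\, C_{rk}^{-1} k^{-1}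 |I|$, i.e. $|T_I| \in \mathcal{O}(|I|/k)$. -/
/-!
Levels `d (j - 1) < ℓ ≤ d j` have reference diameter at least `diam(r⁽⁰⁾) / 2 ^ j`, so each of
these `d` levels has at most `C_nb diam(r⁽⁰⁾)^{-(d-1)} x ^ j` nodes, where `x = 2 ^ (d - 1)`.
Summing the blocks gives `d` times a geometric series, `∑_{j ≤ m} x ^ j < x ^ (m + 1) / (x - 1)`,
and the bound on `ℓ_max = d m` says exactly `x ^ m ≤ x |I| / (C_rk k)`; finally
`x ^ 2 / (x - 1) ≤ x + 2` for `x ≥ 2`.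
-/

open Finset

theorem sum_range_mul_add_one_le_nsmul_sum {M : Type*} [AddCommMonoid M] [PartialOrder M]
    [IsOrderedAddMonoid M] {f b : ℕ → M} {d : ℕ} (hd : d ≠ 0) (hb : 0 ≤ b 0) (n : ℕ)
    (hf : ∀ j ≤ n, ∀ ℓ ≤ d * j, f ℓ ≤ b j) :
    ∑ ℓ ∈ range (d * n + 1), f ℓ ≤ d • ∑ j ∈ range (n + 1), b j := by
  induction n with
  | zero => simpa using (hf 0 le_rfl 0 le_rfl).trans (le_self_nsmul hb hd)
  | succ n ih =>
    have hblock : ∑ i ∈ range d, f (d * n + 1 + i) ≤ d • b (n + 1) := by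
      simpa using sum_le_card_nsmul (range d) _ _ fun i hi =>
        hf (n + 1) le_rfl _ (by rw [mem_range] at hi; linarith)
    rw [show d * (n + 1) + 1 = d * n + 1 + d by ring, sum_range_add, sum_range_succ _ (n + 1),
      nsmul_add]
    exact add_le_add (ih fun j hj => hf j (by omega)) hblock

theorem apply_mul_eq_div_two_pow {K : Type*} [DivisionSemiring K] {a : ℕ → K} {d : ℕ}
    (ha : ∀ ℓ, a (ℓ + d) = a ℓ / 2) (j : ℕ) : a (d * j) = a 0 / 2 ^ j := by
  induction j with
  | zero => simp
  | succ j ih => rw [mul_add_one, ha, ih, pow_succ', div_eq_mul_inv, div_eq_mul_inv, div_eq_mul_inv,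
      mul_inv_rev, mul_assoc]

theorem inv_pow_le_of_halving {K : Type*} [Field K] [LinearOrder K] [IsStrictOrderedRing K]
    {a : ℕ → K} {d : ℕ} (hpos : ∀ ℓ, 0 < a ℓ) (ha : ∀ ℓ, a (ℓ + d) = a ℓ / 2)
    (hanti : Antitone a) (p : ℕ) {j ℓ : ℕ} (hℓ : ℓ ≤ d * j) :
    (a ℓ ^ p)⁻¹ ≤ (a 0 ^ p)⁻¹ * (2 ^ p) ^ j := by
  have hlow : a 0 / 2 ^ j ≤ a ℓ := apply_mul_eq_div_two_pow ha j ▸ hanti hℓ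
  have h0 := hpos 0
  calc (a ℓ ^ p)⁻¹ ≤ ((a 0 / 2 ^ j) ^ p)⁻¹ := by gcongr
    _ = (a 0 ^ p)⁻¹ * (2 ^ p) ^ j := by rw [div_pow, ← pow_mul, mul_comm j, pow_mul]; field_simp

theorem geom_sum_lt_pow_div {K : Type*} [Field K] [LinearOrder K] [IsStrictOrderedRing K]
    {x : K} (hx : 1 < x) (n : ℕ) : ∑ j ∈ range n, x ^ j < x ^ n / (x - 1) := by
  rw [geom_sum_eq hx.ne']
  gcongr
  linarith

theorem sq_div_sub_one_le {K : Type*} [Field K] [LinearOrder K] [IsStrictOrderedRing K]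
    {x : K} (hx : 2 ≤ x) : x ^ 2 / (x - 1) ≤ x + 2 := by
  rw [div_le_iff₀ (by linarith)]
  nlinarith

theorem geom_sum_range_succ_lt {K : Type*} [Field K] [LinearOrder K] [IsStrictOrderedRing K]
    {x B : K} (hx : 2 ≤ x) (hB : 0 ≤ B) {m : ℕ} (hm : x ^ m ≤ x * B) :
    ∑ j ∈ range (m + 1), x ^ j < (x + 2) * B := by
  have hx1 : 0 < x - 1 := by linarith
  calc ∑ j ∈ range (m + 1), x ^ j < x ^ (m + 1) / (x - 1) := geom_sum_lt_pow_div (by linarith) _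
    _ ≤ x ^ 2 / (x - 1) * B := by
        rw [div_mul_eq_mul_div, pow_succ', sq, mul_assoc]
        gcongr
    _ ≤ (x + 2) * B := by gcongr; exact sq_div_sub_one_le hx

theorem pow_le_mul_div_of_le_logb {d m : ℕ} {u v : ℝ} (hd : 2 ≤ d) (hu : 0 < u) (hv : 0 < v)
    (h : ((d * m : ℕ) : ℝ) ≤ d / (d - 1) * (Real.logb 2 u - Real.logb 2 v) + d) :
    ((2 : ℝ) ^ (d - 1)) ^ m ≤ 2 ^ (d - 1) * (u / v) := by
  have hd1 : (0 : ℝ) < d - 1 := by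
    have : (2 : ℝ) ≤ d := by exact_mod_cast hd
    linarith
  rw [← Real.logb_div hu.ne' hv.ne'] at h
  have hexp : ((d - 1 : ℕ) : ℝ) * m ≤ Real.logb 2 (u / v) + (d - 1 : ℕ) := by
    push_cast [Nat.cast_sub (by omega : 1 ≤ d)] at h ⊢
    rw [div_mul_eq_mul_div, div_add' _ _ _ hd1.ne', le_div_iff₀ hd1] at h
    nlinarith
  calc ((2 : ℝ) ^ (d - 1)) ^ m = 2 ^ (((d - 1 : ℕ) : ℝ) * m) := by
        rw [← pow_mul, ← Real.rpow_natCast]; push_cast; ring_nf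
    _ ≤ 2 ^ (Real.logb 2 (u / v) + (d - 1 : ℕ)) := Real.rpow_le_rpow_of_exponent_le one_le_two hexp
    _ = 2 ^ (d - 1) * (u / v) := by
        rw [Real.rpow_add two_pos, Real.rpow_logb two_pos (by norm_num) (div_pos hu hv),
          Real.rpow_natCast, mul_comm]

/-- The total number of nodes of the cluster tree is bounded by
`C_nb d diam(r^{(0)})^{-(d-1)} (2^{d-1}+2) C_rk⁻¹ k⁻¹ |I|`. -/
theorem stmt16 (d k nI : ℕ) (hd : 2 ≤ d) (hk : 1 ≤ k) (hnI : 1 ≤ nI)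
    (Cnb Crk : ℝ) (hCnb : 0 < Cnb) (hCrk : 0 < Crk)
    (lmax m : ℕ) (hlm : lmax = d * m)
    (a : ℕ → ℝ) (hpos : ∀ ℓ, 0 < a ℓ)
    (hhalf : ∀ ℓ, a (ℓ + d) = a ℓ / 2)
    (hmono : ∀ ℓ, a (ℓ + 1) ≤ a ℓ)
    (N : ℕ → ℕ)
    (hN : ∀ ℓ ≤ lmax, (N ℓ : ℝ) ≤ Cnb * (a ℓ ^ (d - 1))⁻¹)
    (hlmax : (lmax : ℝ) ≤
      (d : ℝ) / ((d : ℝ) - 1) * (Real.logb 2 nI - Real.logb 2 (Crk * k)) + d) :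
    ((∑ ℓ ∈ Finset.range (lmax + 1), N ℓ : ℕ) : ℝ) <
      Cnb * d * (a 0 ^ (d - 1))⁻¹ * ((2 : ℝ) ^ (d - 1) + 2) * Crk⁻¹ * (k : ℝ)⁻¹ * nI := by
  subst hlm
  have hk' : (0 : ℝ) < k := by exact_mod_cast hk
  have hnI' : (0 : ℝ) < nI := by exact_mod_cast hnI
  have hx : (2 : ℝ) ≤ 2 ^ (d - 1) := le_self_pow₀ one_le_two (by omega)
  have hlevel : ∀ j ≤ m, ∀ ℓ ≤ d * j,
      (N ℓ : ℝ) ≤ Cnb * (a 0 ^ (d - 1))⁻¹ * (2 ^ (d - 1)) ^ j := fun j hj ℓ hℓ => by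
    rw [mul_assoc]
    exact (hN ℓ (hℓ.trans (Nat.mul_le_mul_left d hj))).trans <| mul_le_mul_of_nonneg_left
      (inv_pow_le_of_halving hpos hhalf (antitone_nat_of_succ_le hmono) _ hℓ) hCnb.le
  have hgeom := geom_sum_range_succ_lt hx (by positivity)
    (pow_le_mul_div_of_le_logb hd hnI' (mul_pos hCrk hk') hlmax)
  have hA := hpos 0
  push_cast
  calc ∑ ℓ ∈ range (d * m + 1), (N ℓ : ℝ)
      ≤ d • ∑ j ∈ range (m + 1), Cnb * (a 0 ^ (d - 1))⁻¹ * (2 ^ (d - 1)) ^ j :=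
        sum_range_mul_add_one_le_nsmul_sum (by omega) (by positivity) m hlevel
    _ = Cnb * d * (a 0 ^ (d - 1))⁻¹ * ∑ j ∈ range (m + 1), ((2 : ℝ) ^ (d - 1)) ^ j := by
        rw [nsmul_eq_mul, ← mul_sum]; ring
    _ < Cnb * d * (a 0 ^ (d - 1))⁻¹ * ((2 ^ (d - 1) + 2) * (nI / (Crk * k))) := by
        gcongr
    _ = _ := by field_simp
end
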